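/- arXiv:2305.14978 — 6 statements merged into one kernel-verified Lean document; each statement's English description precedes it below -/
import Mathlib

section
/- Let A be the block upper-triangular matrix [[A₁₁, A₁₂],[0, A₂₂]]. Then exp(Ah) = [[exp(A₁₁h), Φ₁₂(h)],[0, exp(A₂₂h)]] where Φ₁₂(h) = ∫₀^h exp(A₁₁(h-τ)) A₁₂ exp(A₂₂ τ) dτ. -/
/-!
Let `R t` be the right-hand side with `h` replaced by `t`. Its diagonal blocks satisfy
`X' = Aᵢᵢ X`, and writing `exp ((t - τ) • A₁₁) = exp (t • A₁₁) * exp (-τ • A₁₁)` under the integral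
shows that its off-diagonal block `Φ` satisfies `Φ' = A₁₁ Φ + A₁₂ exp (t • A₂₂)`; together,
`R' = A R` with `R 0 = 1`. Any such solution equals `exp (t • A)`, because
`u ↦ exp ((t - u) • A) * R u` has derivative zero.
-/

open MeasureTheory Matrix NormedSpace
attribute [local instance] Matrix.frobeniusNormedAddCommGroup Matrix.frobeniusNormedSpace

theorem eq_exp_smul_mul_of_hasDerivAt {𝕂 𝔸 : Type*} [RCLike 𝕂] [NormedRing 𝔸] [NormedAlgebra 𝕂 𝔸]
    [CompleteSpace 𝔸] {a : 𝔸} {R : 𝕂 → 𝔸} (hR : ∀ t, HasDerivAt R (a * R t) t) (t : 𝕂) :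
    R t = exp (t • a) * R 0 := by
  have hG : ∀ u, HasDerivAt (fun u => exp ((t - u) • a) * R u) 0 u := fun u => by
    have hc : Commute a (exp ((t - u) • a)) := ((Commute.refl a).smul_right _).exp_right
    have h := ((hasDerivAt_exp_smul_const' a (t - u)).scomp u
      ((hasDerivAt_id u).const_sub t)).fun_mul (hR u)
    simp only [Function.comp_def, neg_one_smul] at h
    rwa [neg_mul, ← mul_assoc, ← hc.eq, neg_add_cancel] at h
  simpa using is_const_of_deriv_eq_zero (fun u => (hG u).differentiableAt)
    (fun u => (hG u).deriv) t 0

section MatrixCalculus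

variable {𝕜 : Type*} [RCLike 𝕜] {l m n p : Type*} [Fintype l] [Fintype m] [Fintype n] [Fintype p]

theorem Matrix.isBoundedBilinearMap_mul :
    IsBoundedBilinearMap 𝕜 fun XY : Matrix l m 𝕜 × Matrix m n 𝕜 => XY.1 * XY.2 where
  add_left := Matrix.add_mul
  smul_left c X Y := Matrix.smul_mul c X Y
  add_right := Matrix.mul_add
  smul_right c X Y := Matrix.mul_smul X c Y
  bound := ⟨1, one_pos, fun X Y => by simpa using Matrix.frobenius_norm_mul X Y⟩

theorem HasDerivAt.matrix_mul {f : 𝕜 → Matrix l m 𝕜} {g : 𝕜 → Matrix m n 𝕜}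
    {f' : Matrix l m 𝕜} {g' : Matrix m n 𝕜} {t : 𝕜}
    (hf : HasDerivAt f f' t) (hg : HasDerivAt g g' t) :
    HasDerivAt (fun t => f t * g t) (f' * g t + f t * g') t := by
  rw [add_comm]
  exact Matrix.isBoundedBilinearMap_mul.toContinuousLinearMap.hasDerivAt_of_bilinear
    (fun _ => hf) (fun _ => hg)

theorem HasDerivAt.matrix_fromBlocks {A : 𝕜 → Matrix n l 𝕜} {B : 𝕜 → Matrix n m 𝕜}
    {C : 𝕜 → Matrix p l 𝕜} {D : 𝕜 → Matrix p m 𝕜} {A' : Matrix n l 𝕜} {B' : Matrix n m 𝕜}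
    {C' : Matrix p l 𝕜} {D' : Matrix p m 𝕜} {t : 𝕜}
    (hA : HasDerivAt A A' t) (hB : HasDerivAt B B' t) (hC : HasDerivAt C C' t)
    (hD : HasDerivAt D D' t) :
    HasDerivAt (fun t => fromBlocks (A t) (B t) (C t) (D t)) (fromBlocks A' B' C' D') t := by
  let L : (Matrix n l 𝕜 × Matrix n m 𝕜) × (Matrix p l 𝕜 × Matrix p m 𝕜) →ₗ[𝕜]
      Matrix (n ⊕ p) (l ⊕ m) 𝕜 :=
    { toFun := fun X => fromBlocks X.1.1 X.1.2 X.2.1 X.2.2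
      map_add' := fun X Y => (fromBlocks_add ..).symm
      map_smul' := fun c X => (fromBlocks_smul ..).symm }
  exact (LinearMap.toContinuousLinearMap L).hasFDerivAt.comp_hasDerivAt t
    ((hA.prodMk hB).prodMk (hC.prodMk hD))

section Exp

variable [DecidableEq m]

/- The Frobenius normed-algebra structure is installed only inside proofs, so that statements
elaborate with the default matrix instances used in the theorem. -/

@[fun_prop]
theorem Matrix.continuous_exp : Continuous (exp : Matrix m m 𝕜 → Matrix m m 𝕜) :=
  letI := Matrix.frobeniusNormedRing (α := 𝕜) (m := m)
  letI := Matrix.frobeniusNormedAlgebra (R := ℚ) (α := 𝕜) (m := m)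
  NormedSpace.exp_continuous

theorem Matrix.hasDerivAt_exp_smul (A : Matrix m m 𝕜) (t : 𝕜) :
    HasDerivAt (fun u => exp (u • A)) (A * exp (t • A)) t :=
  letI := Matrix.frobeniusNormedRing (α := 𝕜) (m := m)
  letI := Matrix.frobeniusNormedAlgebra (R := 𝕜) (α := 𝕜) (m := m)
  hasDerivAt_exp_smul_const' A t

theorem Matrix.eq_exp_smul_mul_of_hasDerivAt {A : Matrix m m 𝕜} {R : 𝕜 → Matrix m m 𝕜}
    (hR : ∀ t, HasDerivAt R (A * R t) t) (t : 𝕜) :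
    R t = exp (t • A) * R 0 :=
  letI := Matrix.frobeniusNormedRing (α := 𝕜) (m := m)
  letI := Matrix.frobeniusNormedAlgebra (R := 𝕜) (α := 𝕜) (m := m)
  _root_.eq_exp_smul_mul_of_hasDerivAt hR t

end Exp

end MatrixCalculus

section VanLoan

variable {m n : Type*} [Fintype m] [Fintype n] [DecidableEq m] [DecidableEq n]

theorem Matrix.exp_add_smul (A : Matrix m m ℝ) (s t : ℝ) :
    exp ((s + t) • A) = exp (s • A) * exp (t • A) := by
  rw [add_smul, Matrix.exp_add_of_commute _ _ (((Commute.refl A).smul_left s).smul_right t)]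

theorem hasDerivAt_integral_exp_smul_mul_exp_smul (A : Matrix m m ℝ) (B : Matrix m n ℝ)
    (D : Matrix n n ℝ) (t : ℝ) :
    HasDerivAt (fun t => ∫ τ in (0 : ℝ)..t, exp ((t - τ) • A) * B * exp (τ • D))
      (A * (∫ τ in (0 : ℝ)..t, exp ((t - τ) • A) * B * exp (τ • D)) + B * exp (t • D)) t := by
  let f : ℝ → Matrix m n ℝ := fun τ => exp ((-τ) • A) * B * exp (τ • D)
  have hf : Continuous f := by fun_prop
  have hsplit : ∀ t, ∫ τ in (0 : ℝ)..t, exp ((t - τ) • A) * B * exp (τ • D) =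
      exp (t • A) * ∫ τ in (0 : ℝ)..t, f τ := fun t => by
    have hfactor : ∀ τ, exp ((t - τ) • A) * B * exp (τ • D) = exp (t • A) * f τ := fun τ => by
      simp only [f, sub_eq_add_neg, Matrix.exp_add_smul, Matrix.mul_assoc]
    simp only [hfactor]
    exact (Matrix.isBoundedBilinearMap_mul.toContinuousLinearMap
      (exp (t • A))).intervalIntegral_comp_comm (hf.intervalIntegrable (μ := volume) 0 t)
  have h := (Matrix.hasDerivAt_exp_smul A t).matrix_mul
    (hf.integral_hasStrictDerivAt 0 t).hasDerivAt
  have hcancel : exp (t • A) * f t = B * exp (t • D) := by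
    simp only [f, ← Matrix.mul_assoc, ← Matrix.exp_add_smul, add_neg_cancel, zero_smul,
      exp_zero, Matrix.one_mul]
  simp only [hsplit]
  rwa [hcancel, Matrix.mul_assoc] at h

end VanLoan

/-- Van Loan's theorem: the exponential of a block upper-triangular matrix
A = [[A₁₁, A₁₂],[0, A₂₂]] satisfies
exp(Ah) = [[exp(A₁₁h), Φ₁₂(h)],[0, exp(A₂₂h)]] with
Φ₁₂(h) = ∫₀^h exp(A₁₁(h-τ)) A₁₂ exp(A₂₂τ) dτ. -/
theorem vanLoan_block_exp {m n : ℕ} (A₁₁ : Matrix (Fin m) (Fin m) ℝ)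
    (A₁₂ : Matrix (Fin m) (Fin n) ℝ) (A₂₂ : Matrix (Fin n) (Fin n) ℝ) (h : ℝ) :
    NormedSpace.exp (h • Matrix.fromBlocks A₁₁ A₁₂ 0 A₂₂) =
      Matrix.fromBlocks (NormedSpace.exp (h • A₁₁))
        (∫ τ in (0:ℝ)..h, NormedSpace.exp ((h - τ) • A₁₁) * A₁₂ * NormedSpace.exp (τ • A₂₂))
        0 (NormedSpace.exp (h • A₂₂)) := by
  let R : ℝ → Matrix (Fin m ⊕ Fin n) (Fin m ⊕ Fin n) ℝ := fun t =>
    fromBlocks (exp (t • A₁₁)) (∫ τ in (0:ℝ)..t, exp ((t - τ) • A₁₁) * A₁₂ * exp (τ • A₂₂)) 0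
      (exp (t • A₂₂))
  have hR : ∀ t, HasDerivAt R (fromBlocks A₁₁ A₁₂ 0 A₂₂ * R t) t := fun t => by
    have h := (Matrix.hasDerivAt_exp_smul A₁₁ t).matrix_fromBlocks
      (hasDerivAt_integral_exp_smul_mul_exp_smul A₁₁ A₁₂ A₂₂ t) (hasDerivAt_const t 0)
      (Matrix.hasDerivAt_exp_smul A₂₂ t)
    refine h.congr_deriv ?_
    simp [R, fromBlocks_multiply]
  have hR0 : R 0 = 1 := by simp [R]
  simpa [hR0] using (Matrix.eq_exp_smul_mul_of_hasDerivAt hR h).symm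
end

section
/- Let A_IOUP be the d(q+1) × d(q+1) block companion matrix whose (i, i+1) blocks are I_d for i = 0,…,q-1, whose (q,q) block is L, and all other blocks zero. Then exp(A_IOUP h) = [[exp(A_IWP h), Φ₁₂(h)],[0, exp(Lh)]], where A_IWP is the dq × dq nilpotent shift matrix (blocks I_d on the superdiagonal) and Φ₁₂(h) is the dq × d block column vector whose i-th d×d block (i = 0,…,q-1) equals h^{q-i} φ_{q-i}(Lh). -/
open MeasureTheory Matrix
attribute [local instance] Matrix.frobeniusNormedAddCommGroup Matrix.frobeniusNormedSpace

/-- The φ-functions of exponential integrators for square matrices: φ₀ = exp, and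
φ_k(M) = ∫₀¹ exp(M(1-τ)) τ^{k-1}/(k-1)! dτ for k ≥ 1. -/
noncomputable def phiM {d : ℕ} (k : ℕ) (M : Matrix (Fin d) (Fin d) ℝ) : Matrix (Fin d) (Fin d) ℝ :=
  if k = 0 then NormedSpace.exp M
  else ∫ τ in (0:ℝ)..1, (τ ^ (k - 1) / (Nat.factorial (k - 1) : ℝ)) • NormedSpace.exp ((1 - τ) • M)

/-- The dq × dq drift matrix of the (q-1)-times integrated Wiener process:
the nilpotent block shift matrix with I_d blocks on the superdiagonal. -/
def A_IWP (d q : ℕ) : Matrix (Fin q × Fin d) (Fin q × Fin d) ℝ := fun i j =>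
  if (j.1 : ℕ) = (i.1 : ℕ) + 1 ∧ i.2 = j.2 then 1 else 0

/-- The dq × d block column with I_d in the last block and zeros elsewhere. -/
def E_last (d q : ℕ) : Matrix (Fin q × Fin d) (Fin d) ℝ := fun i b =>
  if (i.1 : ℕ) = q - 1 ∧ i.2 = b then 1 else 0

/-- The d(q+1) × d(q+1) drift matrix of the q-times integrated Ornstein–Uhlenbeck process
with rate matrix L: blocks (i,i+1) are I_d for i = 0,…,q-1, block (q,q) is L, rest zero. -/
def A_IOUP (d q : ℕ) (L : Matrix (Fin d) (Fin d) ℝ) :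
    Matrix ((Fin q × Fin d) ⊕ Fin d) ((Fin q × Fin d) ⊕ Fin d) ℝ :=
  Matrix.fromBlocks (A_IWP d q) (E_last d q) 0 L


/-! `A_IOUP` is block upper triangular, so the top-right block of its `n`-th power is
`∑_{j<n} A_IWPʲ E_last Lⁿ⁻¹⁻ʲ`. As `A_IWPʲ E_last` is the identity placed in block row `q-1-j`,
block row `i` of this sum is `Lⁿ⁻ᵏ` for `k = q - i` (and `0` when `n < k`). Hence block row `i` of
the exponential series is `∑ₘ h^(m+k) Lᵐ / (m+k)!`, which is `hᵏ φₖ(hL)`: expand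
`exp((1-τ)hL)` under the integral defining `φₖ` and integrate term by term with the Beta integral
`∫₀¹ τ^(k-1) (1-τ)ᵐ dτ = (k-1)! m! / (k+m)!`. -/

open Finset
open scoped Nat

variable {l m n o R : Type*}

theorem HasSum.matrix_fromBlocks {ι : Type*} [TopologicalSpace R] [AddCommMonoid R]
    {A : ι → Matrix l n R} {B : ι → Matrix l o R} {C : ι → Matrix m n R} {D : ι → Matrix m o R}
    {a b c d} (hA : HasSum A a) (hB : HasSum B b) (hC : HasSum C c) (hD : HasSum D d) :
    HasSum (fun x => Matrix.fromBlocks (A x) (B x) (C x) (D x)) (Matrix.fromBlocks a b c d) := by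
  refine Pi.hasSum.2 fun i => Pi.hasSum.2 fun j => ?_
  rcases i with i | i <;> rcases j with j | j
  exacts [Pi.hasSum.1 (Pi.hasSum.1 hA i) j, Pi.hasSum.1 (Pi.hasSum.1 hB i) j,
    Pi.hasSum.1 (Pi.hasSum.1 hC i) j, Pi.hasSum.1 (Pi.hasSum.1 hD i) j]

namespace Matrix

theorem fromBlocks_zero₂₁_pow [Fintype m] [Fintype n] [DecidableEq m] [DecidableEq n] [Semiring R]
    (A : Matrix m m R) (B : Matrix m n R) (D : Matrix n n R) (k : ℕ) :
    fromBlocks A B 0 D ^ k =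
      fromBlocks (A ^ k) (∑ j ∈ range k, A ^ j * B * D ^ (k - 1 - j)) 0 (D ^ k) := by
  induction k with
  | zero => simp
  | succ k ih =>
    have hsum : (∑ j ∈ range k, A ^ j * B * D ^ (k - 1 - j)) * D + A ^ k * B =
        ∑ j ∈ range (k + 1), A ^ j * B * D ^ (k - j) := by
      rw [sum_range_succ, Nat.sub_self, pow_zero, Matrix.mul_one, Matrix.sum_mul]
      refine congrArg (· + _) (sum_congr rfl fun j hj => ?_)
      rw [Matrix.mul_assoc, ← pow_succ]
      have := mem_range.1 hj
      congr 2
      omega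
    rw [pow_succ, ih, fromBlocks_multiply]
    simp [← pow_succ, ← hsum, add_comm]

attribute [local instance] Matrix.frobeniusNormedRing Matrix.frobeniusNormedAlgebra in
theorem hasSum_exp [Fintype m] [DecidableEq m] (A : Matrix m m ℝ) :
    HasSum (fun k => (k !⁻¹ : ℝ) • A ^ k) (NormedSpace.exp A) :=
  NormedSpace.exp_series_hasSum_exp' A

theorem exp_smul_fromBlocks_zero₂₁ [Fintype m] [Fintype n] [DecidableEq m] [DecidableEq n]
    (t : ℝ) (A : Matrix m m ℝ) (B : Matrix m n ℝ) (D : Matrix n n ℝ) {C : Matrix m n ℝ}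
    (hC : HasSum (fun k => (t ^ k / k !) • ∑ j ∈ range k, A ^ j * B * D ^ (k - 1 - j)) C) :
    NormedSpace.exp (t • fromBlocks A B 0 D) =
      fromBlocks (NormedSpace.exp (t • A)) C 0 (NormedSpace.exp (t • D)) := by
  refine (hasSum_exp _).unique
    (((hasSum_exp (t • A)).matrix_fromBlocks hC hasSum_zero (hasSum_exp (t • D))).congr_fun
      fun k => ?_)
  rw [smul_pow, fromBlocks_zero₂₁_pow, fromBlocks_smul, fromBlocks_smul]
  simp [smul_pow, smul_smul, div_eq_inv_mul]

end Matrix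

theorem integral_pow_mul_one_sub_pow (a b : ℕ) :
    ∫ x in (0 : ℝ)..1, x ^ a * (1 - x) ^ b = (a ! : ℝ) * b ! / (a + b + 1)! := by
  have hbeta := Complex.betaIntegral_eq_Gamma_mul_div (a + 1) (b + 1)
    (by simpa using a.cast_add_one_pos) (by simpa using b.cast_add_one_pos)
  rw [Complex.betaIntegral, show (a : ℂ) + 1 + (b + 1) = (a + b + 1 : ℕ) + 1 by push_cast; ring,
    Complex.Gamma_nat_eq_factorial, Complex.Gamma_nat_eq_factorial,
    Complex.Gamma_nat_eq_factorial] at hbeta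
  simp only [add_sub_cancel_right, Complex.cpow_natCast] at hbeta
  apply Complex.ofReal_injective
  rw [← intervalIntegral.integral_ofReal]
  push_cast
  exact hbeta

theorem integral_pow_div_factorial_mul_one_sub_pow_div_factorial (a b : ℕ) :
    ∫ x in (0 : ℝ)..1, x ^ a / a ! * ((b ! : ℝ)⁻¹ * (1 - x) ^ b) = ((b + (a + 1))! : ℝ)⁻¹ := by
  simp_rw [show ∀ x : ℝ, x ^ a / a ! * ((b ! : ℝ)⁻¹ * (1 - x) ^ b) =
      ((a ! : ℝ) * b !)⁻¹ * (x ^ a * (1 - x) ^ b) from fun x => by ring]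
  rw [intervalIntegral.integral_const_mul, integral_pow_mul_one_sub_pow,
    show b + (a + 1) = a + b + 1 by ring]
  field_simp

attribute [local instance] Matrix.frobeniusNormedRing Matrix.frobeniusNormedAlgebra in
theorem hasSum_phiM {d k : ℕ} (hk : k ≠ 0) (M : Matrix (Fin d) (Fin d) ℝ) :
    HasSum (fun m => ((m + k)! : ℝ)⁻¹ • M ^ m) (phiM k M) := by
  obtain ⟨a, rfl⟩ := Nat.exists_eq_add_one_of_ne_zero hk
  rw [phiM, if_neg hk, Nat.add_sub_cancel]
  have hterm (m : ℕ) : ((m + (a + 1))! : ℝ)⁻¹ • M ^ m =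
      ∫ τ in (0 : ℝ)..1, (τ ^ a / a !) • ((m ! : ℝ)⁻¹ • ((1 - τ) • M) ^ m) := by
    simp_rw [smul_pow, smul_smul]
    rw [intervalIntegral.integral_smul_const,
      integral_pow_div_factorial_mul_one_sub_pow_div_factorial]
  simp_rw [hterm]
  refine intervalIntegral.hasSum_integral_of_dominated_convergence
    (fun m _ => ‖(m ! : ℝ)⁻¹ • M ^ m‖) (fun m => ?_) (fun m => ?_) ?_ ?_ ?_
  · exact (by fun_prop : Continuous _).aestronglyMeasurable
  · refine Filter.Eventually.of_forall fun τ hτ => ?_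
    rw [Set.uIoc_of_le zero_le_one] at hτ
    have h1 : ‖τ ^ a / (a ! : ℝ)‖ ≤ 1 := by
      rw [Real.norm_eq_abs, abs_of_nonneg (div_nonneg (pow_nonneg hτ.1.le _) (by positivity))]
      exact div_le_one_of_le₀
        ((pow_le_one₀ hτ.1.le hτ.2).trans (Nat.one_le_cast.2 (Nat.factorial_pos a))) (by positivity)
    have h2 : ‖(1 - τ) ^ m‖ ≤ 1 := by
      rw [norm_pow, Real.norm_eq_abs, abs_of_nonneg (by linarith [hτ.2])]
      exact pow_le_one₀ (by linarith [hτ.2]) (by linarith [hτ.1])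
    rw [smul_pow, smul_comm ((m ! : ℝ)⁻¹) ((1 - τ) ^ m), norm_smul, norm_smul]
    calc ‖τ ^ a / (a ! : ℝ)‖ * (‖(1 - τ) ^ m‖ * ‖(m ! : ℝ)⁻¹ • M ^ m‖)
        ≤ 1 * (1 * ‖(m ! : ℝ)⁻¹ • M ^ m‖) := by gcongr
      _ = ‖(m ! : ℝ)⁻¹ • M ^ m‖ := by ring
  · exact Filter.Eventually.of_forall fun τ _ => NormedSpace.norm_expSeries_summable' M
  · exact intervalIntegrable_const
  · exact Filter.Eventually.of_forall fun τ _ => (Matrix.hasSum_exp _).const_smul _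

theorem hasSum_pow_smul_phiM_smul {d k : ℕ} (hk : k ≠ 0) (t : ℝ)
    (M : Matrix (Fin d) (Fin d) ℝ) :
    HasSum (fun n => (t ^ n / n !) • if k ≤ n then M ^ (n - k) else 0)
      (t ^ k • phiM k (t • M)) := by
  have hzero : ∑ n ∈ range k, (t ^ n / n !) • (if k ≤ n then M ^ (n - k) else 0) = 0 :=
    sum_eq_zero fun n hn => by rw [if_neg (by simpa using hn), smul_zero]
  rw [← hasSum_nat_add_iff' k, hzero, sub_zero]
  refine ((hasSum_phiM hk (t • M)).const_smul (t ^ k)).congr_fun fun m => ?_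
  rw [if_pos (Nat.le_add_left k m), Nat.add_sub_cancel, smul_pow, smul_smul, smul_smul, pow_add]
  congr 1
  ring

section IntegratedWienerProcess

variable {d q : ℕ} {κ : Type*}

theorem A_IWP_mul_apply (X : Matrix (Fin q × Fin d) κ ℝ) (i : Fin q × Fin d) (b : κ) :
    (A_IWP d q * X) i b = if h : (i.1 : ℕ) + 1 < q then X (⟨i.1 + 1, h⟩, i.2) b else 0 := by
  rw [Matrix.mul_apply]
  split_ifs with hi
  · rw [Finset.sum_eq_single (⟨i.1 + 1, hi⟩, i.2)]
    · simp [A_IWP]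
    · rintro k - hk
      simp only [A_IWP, mul_eq_zero, ite_eq_right_iff]
      exact Or.inl fun h => (hk (Prod.ext (Fin.ext h.1) h.2.symm)).elim
    · simp
  · refine Finset.sum_eq_zero fun k _ => ?_
    simp only [A_IWP, mul_eq_zero, ite_eq_right_iff]
    exact Or.inl fun h => absurd (h.1 ▸ k.1.isLt) hi

theorem A_IWP_pow_mul_E_last_apply (j : ℕ) (i : Fin q × Fin d) (b : Fin d) :
    (A_IWP d q ^ j * E_last d q) i b = if (i.1 : ℕ) + j = q - 1 ∧ i.2 = b then 1 else 0 := by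
  induction j generalizing i with
  | zero => simp [E_last]
  | succ j ih =>
    rw [pow_succ', Matrix.mul_assoc, A_IWP_mul_apply]
    split_ifs <;> simp_all <;> omega

theorem A_IWP_pow_mul_E_last_mul_apply (j : ℕ) (X : Matrix (Fin d) κ ℝ) (i : Fin q × Fin d)
    (b : κ) :
    (A_IWP d q ^ j * E_last d q * X) i b = if (i.1 : ℕ) + j = q - 1 then X i.2 b else 0 := by
  rw [Matrix.mul_apply]
  simp_rw [A_IWP_pow_mul_E_last_apply, ite_and, ite_mul, one_mul, zero_mul]
  simp

theorem sum_A_IWP_pow_mul_E_last_mul_pow_apply (L : Matrix (Fin d) (Fin d) ℝ) (n : ℕ)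
    (i : Fin q × Fin d) (b : Fin d) :
    (∑ j ∈ range n, A_IWP d q ^ j * E_last d q * L ^ (n - 1 - j)) i b =
      if q - (i.1 : ℕ) ≤ n then (L ^ (n - (q - i.1))) i.2 b else 0 := by
  have hi := i.1.isLt
  simp only [Matrix.sum_apply, A_IWP_pow_mul_E_last_mul_apply]
  have hj : ∀ j, (i.1 : ℕ) + j = q - 1 ↔ j = q - 1 - i.1 := by omega
  have hlt : q - 1 - i.1 < n ↔ q - i.1 ≤ n := by omega
  have hsub : n - 1 - (q - 1 - i.1) = n - (q - i.1) := by omega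
  simp_rw [hj, Finset.sum_ite_eq', mem_range, hlt, hsub]

end IntegratedWienerProcess

theorem ioup_transition_matrix_general {d q : ℕ} (L : Matrix (Fin d) (Fin d) ℝ)
    (h : ℝ) :
    NormedSpace.exp (h • A_IOUP d q L) =
      Matrix.fromBlocks (NormedSpace.exp (h • A_IWP d q))
        (fun i b => (h ^ (q - (i.1 : ℕ)) • phiM (q - (i.1 : ℕ)) (h • L)) i.2 b)
        0 (NormedSpace.exp (h • L)) := by
  refine Matrix.exp_smul_fromBlocks_zero₂₁ h _ _ _ (Pi.hasSum.2 fun i => Pi.hasSum.2 fun b => ?_)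
  have hk : q - (i.1 : ℕ) ≠ 0 := by omega
  refine (Pi.hasSum.1 (Pi.hasSum.1 (hasSum_pow_smul_phiM_smul hk h L) i.2) b).congr_fun fun n => ?_
  simp only [Matrix.smul_apply, sum_A_IWP_pow_mul_E_last_mul_pow_apply]
  split_ifs <;> simp

/-- Proposition 1: the transition matrix of the q-times IOUP is
exp(A_IOUP h) = [[exp(A_IWP h), Φ₁₂(h)],[0, exp(Lh)]], where the i-th d×d block of Φ₁₂(h)
is h^{q-i} φ_{q-i}(Lh). -/
theorem ioup_transition_matrix {d q : ℕ} (hq : 1 ≤ q) (L : Matrix (Fin d) (Fin d) ℝ)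
    (h : ℝ) (hh : 0 < h) :
    NormedSpace.exp (h • A_IOUP d q L) =
      Matrix.fromBlocks (NormedSpace.exp (h • A_IWP d q))
        (fun i b => (h ^ (q - (i.1 : ℕ)) • phiM (q - (i.1 : ℕ)) (h • L)) i.2 b)
        0 (NormedSpace.exp (h • L)) :=
  ioup_transition_matrix_general L h
end

section
/- Let Q(h) = ∫₀^h [[τ² φ₁(Lτ)φ₁(Lτ)ᵀ, τ φ₁(Lτ) exp(Lτ)ᵀ],[τ exp(Lτ) φ₁(Lτ)ᵀ, exp(Lτ)exp(Lτ)ᵀ]] dτ be the process noise covariance of the once-integrated Ornstein–Uhlenbeck process with rate L, and H = [-L, I]. Then Q(h) Hᵀ = [h² φ₂(Lh); h φ₁(Lh)] (block column). -/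
/-!
The integrand of `Q` factors as `X(τ) X(τ)ᵀ` with `X(τ) = [τ φ₁(τL); exp(τL)]`, and
`τ φ₁(τL) = ∫₀^τ exp(uL) du`. Since `L ∫₀^τ exp(uL) du = exp(τL) - I`, we get `H X(τ) = I`, so
`Q(h) Hᵀ = ∫₀ʰ X(τ) dτ`. Its lower block is `∫₀ʰ exp(τL) dτ = h φ₁(hL)`; its upper block is the
repeated integral `∫₀ʰ ∫₀^τ exp(uL) du dτ = ∫₀ʰ (h - u) exp(uL) du = h² φ₂(hL)`.
-/

open MeasureTheory Matrix
attribute [local instance] Matrix.frobeniusNormedAddCommGroup Matrix.frobeniusNormedSpace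

/-- The process noise covariance of the once-integrated Ornstein–Uhlenbeck process with
rate L, written blockwise via the φ-functions. -/
noncomputable def Qioup {d : ℕ} (L : Matrix (Fin d) (Fin d) ℝ) (h : ℝ) :
    Matrix (Fin d ⊕ Fin d) (Fin d ⊕ Fin d) ℝ :=
  ∫ τ in (0:ℝ)..h, Matrix.fromBlocks
    (τ ^ 2 • (phiM 1 (τ • L) * (phiM 1 (τ • L))ᵀ))
    (τ • (phiM 1 (τ • L) * (NormedSpace.exp (τ • L))ᵀ))
    (τ • (NormedSpace.exp (τ • L) * (phiM 1 (τ • L))ᵀ))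
    (NormedSpace.exp (τ • L) * (NormedSpace.exp (τ • L))ᵀ)

attribute [local instance] Matrix.frobeniusNormedRing Matrix.frobeniusNormedAlgebra

-- Instance search does not find this structure on its own (the Frobenius norm topology is not
-- reducibly the product topology of `Matrix`), and `IntervalIntegrable` needs it.
noncomputable abbrev Matrix.frobeniusENormedAddCommMonoid {m n : Type*} [Fintype m] [Fintype n] :
    ENormedAddCommMonoid (Matrix m n ℝ) :=
  NormedAddCommGroup.toENormedAddCommMonoid

attribute [local instance] Matrix.frobeniusENormedAddCommMonoid

open NormedSpace

section BanachAlgebra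

variable {𝔸 : Type*} [NormedRing 𝔸] [NormedAlgebra ℝ 𝔸] [CompleteSpace 𝔸]

theorem continuous_exp_smul_const (L : 𝔸) : Continuous fun t : ℝ => exp (t • L) :=
  continuous_iff_continuousAt.2 fun t => (hasDerivAt_exp_smul_const' (𝕂 := ℝ) L t).continuousAt

theorem mul_integral_exp_smul_const (L : 𝔸) (t : ℝ) :
    L * ∫ u in (0:ℝ)..t, exp (u • L) = exp (t • L) - 1 :=
  calc L * ∫ u in (0:ℝ)..t, exp (u • L) = ∫ u in (0:ℝ)..t, L * exp (u • L) :=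
        ((ContinuousLinearMap.mul ℝ 𝔸 L).intervalIntegral_comp_comm
          ((continuous_exp_smul_const L).intervalIntegrable 0 t)).symm
    _ = exp (t • L) - 1 := by
      rw [intervalIntegral.integral_eq_sub_of_hasDerivAt
        (fun u _ => hasDerivAt_exp_smul_const' (𝕂 := ℝ) L u)
        ((continuous_const.mul (continuous_exp_smul_const L)).intervalIntegrable 0 t)]
      simp

end BanachAlgebra

theorem intervalIntegral.integral_integral_eq_integral_sub_smul {E : Type*}
    [NormedAddCommGroup E] [NormedSpace ℝ E] [CompleteSpace E] {f : ℝ → E}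
    (hf : Continuous f) (h : ℝ) :
    ∫ t in (0:ℝ)..h, ∫ u in (0:ℝ)..t, f u = ∫ u in (0:ℝ)..h, (h - u) • f u := by
  have huf : Continuous fun u : ℝ => u • f u := continuous_id.smul hf
  have hprim (t : ℝ) : HasDerivAt
      (fun t => t • (∫ u in (0:ℝ)..t, f u) - ∫ u in (0:ℝ)..t, u • f u)
      (∫ u in (0:ℝ)..t, f u) t := by
    refine (((hasDerivAt_id' t).fun_smul (hf.integral_hasStrictDerivAt 0 t).hasDerivAt).fun_sub
      (huf.integral_hasStrictDerivAt 0 t).hasDerivAt).congr_deriv ?_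
    simp
  calc ∫ t in (0:ℝ)..h, ∫ u in (0:ℝ)..t, f u
      = h • (∫ u in (0:ℝ)..h, f u) - ∫ u in (0:ℝ)..h, u • f u := by
        rw [intervalIntegral.integral_eq_sub_of_hasDerivAt (fun t _ => hprim t)
          ((intervalIntegral.continuous_primitive (hf.intervalIntegrable · ·) 0).intervalIntegrable
            0 h)]
        simp
    _ = ∫ u in (0:ℝ)..h, (h - u) • f u := by
        simp_rw [sub_smul]
        rw [intervalIntegral.integral_sub (f := fun u => h • f u)
          ((continuous_const.smul hf).intervalIntegrable 0 h) (huf.intervalIntegrable 0 h),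
          intervalIntegral.integral_smul]

theorem Continuous.matrix_fromRows {X R l m n : Type*} [TopologicalSpace X] [TopologicalSpace R]
    {A : X → Matrix l n R} {B : X → Matrix m n R} (hA : Continuous A) (hB : Continuous B) :
    Continuous fun x => fromRows (A x) (B x) :=
  continuous_matrix <| by
    rintro (i | i) j
    exacts [hA.matrix_elem i j, hB.matrix_elem i j]

section RectangularMatrix

variable {l m n p : Type*} [Fintype l] [Fintype m] [Fintype n] [Fintype p]

theorem Matrix.intervalIntegral_mul_const {f : ℝ → Matrix m n ℝ} {a b : ℝ}
    (hf : IntervalIntegrable f volume a b) (B : Matrix n p ℝ) :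
    ∫ τ in a..b, f τ * B = (∫ τ in a..b, f τ) * B :=
  (mulRightLinearMap m ℝ B).toContinuousLinearMap.intervalIntegral_comp_comm hf

theorem Matrix.intervalIntegral_fromRows [DecidableEq l] [DecidableEq m]
    {f : ℝ → Matrix l n ℝ} {g : ℝ → Matrix m n ℝ} {a b : ℝ}
    (hf : IntervalIntegrable f volume a b) (hg : IntervalIntegrable g volume a b) :
    ∫ τ in a..b, fromRows (f τ) (g τ) = fromRows (∫ τ in a..b, f τ) (∫ τ in a..b, g τ) := by
  let top := (mulLeftLinearMap n ℝ (fromRows 1 0 : Matrix (l ⊕ m) l ℝ)).toContinuousLinearMap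
  let bot := (mulLeftLinearMap n ℝ (fromRows 0 1 : Matrix (l ⊕ m) m ℝ)).toContinuousLinearMap
  have hsplit (A : Matrix l n ℝ) (B : Matrix m n ℝ) : fromRows A B = top A + bot B := by
    ext (i | i) j <;> simp [top, bot, fromRows_mul]
  simp_rw [hsplit]
  refine (intervalIntegral.integral_add ⟨top.integrable_comp hf.1, top.integrable_comp hf.2⟩
    ⟨bot.integrable_comp hg.1, bot.integrable_comp hg.2⟩).trans ?_
  rw [top.intervalIntegral_comp_comm hf, bot.intervalIntegral_comp_comm hg]
  rfl

end RectangularMatrix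

section PhiFunctions

variable {d : ℕ}

theorem pow_smul_phiM {k : ℕ} (hk : k ≠ 0) (L : Matrix (Fin d) (Fin d) ℝ) (t : ℝ) :
    t ^ k • phiM k (t • L) =
      ∫ u in (0:ℝ)..t, ((t - u) ^ (k - 1) / (k - 1).factorial : ℝ) • exp (u • L) := by
  set g : ℝ → Matrix (Fin d) (Fin d) ℝ :=
    fun u => ((t - u) ^ (k - 1) / (k - 1).factorial : ℝ) • exp (u • L)
  set F : ℝ → Matrix (Fin d) (Fin d) ℝ :=
    fun σ => ((1 - σ) ^ (k - 1) / (k - 1).factorial : ℝ) • exp ((t * σ) • L)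
  have hreflect : phiM k (t • L) = ∫ σ in (0:ℝ)..1, F σ :=
    calc phiM k (t • L) = ∫ τ in (0:ℝ)..1, F (1 - τ) := by
          simp [phiM, hk, F, smul_smul, mul_comm]
      _ = ∫ σ in (0:ℝ)..1, F σ := by simp [intervalIntegral.integral_comp_sub_left]
  have hscale : t • ∫ σ in (0:ℝ)..1, g (t * σ) = ∫ u in (0:ℝ)..t, g u := by
    rw [intervalIntegral.smul_integral_comp_mul_left]; simp
  obtain ⟨j, rfl⟩ := Nat.exists_eq_succ_of_ne_zero hk
  rw [← hscale, hreflect, pow_succ', mul_smul, ← intervalIntegral.integral_smul]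
  congr 2 with σ
  simp only [g, F, Nat.succ_sub_one, smul_smul, ← mul_one_sub, mul_pow]
  ring_nf

theorem smul_phiM_one (L : Matrix (Fin d) (Fin d) ℝ) (t : ℝ) :
    t • phiM 1 (t • L) = ∫ u in (0:ℝ)..t, exp (u • L) := by
  simpa using pow_smul_phiM one_ne_zero L t

theorem sq_smul_phiM_two (L : Matrix (Fin d) (Fin d) ℝ) (t : ℝ) :
    t ^ 2 • phiM 2 (t • L) = ∫ u in (0:ℝ)..t, (t - u) • exp (u • L) := by
  simpa using pow_smul_phiM two_ne_zero L t

end PhiFunctions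

section IntegratedOU

variable {d : ℕ}

noncomputable def ioupFactor (L : Matrix (Fin d) (Fin d) ℝ) (τ : ℝ) :
    Matrix (Fin d ⊕ Fin d) (Fin d) ℝ :=
  fromRows (τ • phiM 1 (τ • L)) (exp (τ • L))

theorem continuous_smul_phiM_one (L : Matrix (Fin d) (Fin d) ℝ) :
    Continuous fun τ : ℝ => τ • phiM 1 (τ • L) := by
  simp_rw [smul_phiM_one]
  exact intervalIntegral.continuous_primitive
    (fun a b => (continuous_exp_smul_const L).intervalIntegrable a b) 0

theorem continuous_ioupFactor (L : Matrix (Fin d) (Fin d) ℝ) : Continuous (ioupFactor L) :=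
  (continuous_smul_phiM_one L).matrix_fromRows (continuous_exp_smul_const L)

theorem Qioup_eq_integral_ioupFactor_mul_transpose (L : Matrix (Fin d) (Fin d) ℝ) (h : ℝ) :
    Qioup L h = ∫ τ in (0:ℝ)..h, ioupFactor L τ * (ioupFactor L τ)ᵀ := by
  unfold Qioup ioupFactor
  congr 1 with τ
  rw [transpose_fromRows, fromRows_mul_fromCols]
  simp only [transpose_smul, smul_mul, Matrix.mul_smul, smul_smul, sq]

theorem fromCols_neg_one_mul_ioupFactor (L : Matrix (Fin d) (Fin d) ℝ) (τ : ℝ) :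
    fromCols (-L) (1 : Matrix (Fin d) (Fin d) ℝ) * ioupFactor L τ = 1 := by
  rw [ioupFactor, fromCols_mul_fromRows, smul_phiM_one, neg_mul, one_mul]
  -- the Banach-algebra lemma carries the Frobenius normed-ring instances, the goal those of
  -- `Matrix`; they agree only up to unfolding
  erw [mul_integral_exp_smul_const, neg_sub]
  exact sub_add_cancel _ _

end IntegratedOU

theorem Q_mul_Ht_general {d : ℕ} (L : Matrix (Fin d) (Fin d) ℝ) (h : ℝ) :
    Qioup L h * (Matrix.fromCols (-L) 1)ᵀ =
      Matrix.fromRows (h ^ 2 • phiM 2 (h • L)) (h • phiM 1 (h • L)) := by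
  have hX := continuous_ioupFactor L
  have hXXt : Continuous fun τ => ioupFactor L τ * (ioupFactor L τ)ᵀ :=
    hX.matrix_mul hX.matrix_transpose
  have hprojection (τ : ℝ) :
      ioupFactor L τ * (ioupFactor L τ)ᵀ * (fromCols (-L) (1 : Matrix (Fin d) (Fin d) ℝ))ᵀ =
        ioupFactor L τ := by
    rw [Matrix.mul_assoc, ← transpose_mul, fromCols_neg_one_mul_ioupFactor, transpose_one,
      Matrix.mul_one]
  -- With `1` of undetermined column type, the statement's product elaborates through the
  -- `CStarMatrix` default instance; the annotation restores the ordinary matrix product.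
  calc Qioup L h * (fromCols (-L) (1 : Matrix (Fin d) (Fin d) ℝ))ᵀ
      = ∫ τ in (0:ℝ)..h, ioupFactor L τ := by
        rw [Qioup_eq_integral_ioupFactor_mul_transpose,
          ← intervalIntegral_mul_const (hXXt.intervalIntegrable 0 h)]
        simp_rw [hprojection]
    _ = fromRows (∫ τ in (0:ℝ)..h, τ • phiM 1 (τ • L)) (∫ τ in (0:ℝ)..h, exp (τ • L)) :=
        intervalIntegral_fromRows ((continuous_smul_phiM_one L).intervalIntegrable 0 h)
          ((continuous_exp_smul_const L).intervalIntegrable 0 h)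
    _ = fromRows (h ^ 2 • phiM 2 (h • L)) (h • phiM 1 (h • L)) := by
        simp_rw [smul_phiM_one, sq_smul_phiM_two]
        congr 1
        exact intervalIntegral.integral_integral_eq_integral_sub_smul (continuous_exp_smul_const L) h

/-- Q(h) Hᵀ = [h²φ₂(Lh); hφ₁(Lh)] for H = [-L, I]. -/
theorem Q_mul_Ht {d : ℕ} (L : Matrix (Fin d) (Fin d) ℝ) (h : ℝ) (hh : 0 < h) :
    Qioup L h * (Matrix.fromCols (-L) 1)ᵀ =
      Matrix.fromRows (h ^ 2 • phiM 2 (h • L)) (h • phiM 1 (h • L)) :=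
  Q_mul_Ht_general L h
end

section
/- Consider the mean ODE μ̇(t) = A_IOUP μ(t) with A_IOUP = [[0, I],[0, L]] and initial condition μ(0) = [y₀; L y₀]. Then the first block component μ⁽⁰⁾(t) = exp(Lt) y₀ solves the linear ODE ẏ = L y with y(0) = y₀ exactly. -/
/-!
The second block `v` of `μ` solves `v' = L v` and the first block `u` satisfies `u' = v`.
Hence `v - L u` has derivative `L v - L v = 0`, and the consistent initialization makes it vanish
at `0`; so `v = L u`, i.e. `u' = L u` with `u 0 = y₀`. Since `v ↦ L v` is Lipschitz, solutions of
this ODE are unique, and `t ↦ exp (t L) y₀` is one of them.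
-/

open Matrix

section Blocks

variable {n m : Type*}

theorem HasDerivAt.comp_inl {f : ℝ → n ⊕ m → ℝ} {f' : n ⊕ m → ℝ} {t : ℝ}
    (hf : HasDerivAt f f' t) :
    HasDerivAt (fun s a => f s (Sum.inl a)) (fun a => f' (Sum.inl a)) t :=
  hasDerivAt_pi.2 fun a => hasDerivAt_pi.1 hf (Sum.inl a)

theorem HasDerivAt.comp_inr {f : ℝ → n ⊕ m → ℝ} {f' : n ⊕ m → ℝ} {t : ℝ}
    (hf : HasDerivAt f f' t) :
    HasDerivAt (fun s a => f s (Sum.inr a)) (fun a => f' (Sum.inr a)) t :=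
  hasDerivAt_pi.2 fun a => hasDerivAt_pi.1 hf (Sum.inr a)

theorem fromBlocks_zero_one_zero_mulVec [Fintype n] [DecidableEq n] (L : Matrix n n ℝ)
    (x : n ⊕ n → ℝ) :
    fromBlocks 0 1 0 L *ᵥ x = Sum.elim (fun a => x (Sum.inr a)) (L *ᵥ fun a => x (Sum.inr a)) := by
  rw [← Sum.elim_comp_inl_inr x, fromBlocks_mulVec]
  simp only [zero_mulVec, one_mulVec, zero_add, Sum.elim_comp_inr]
  rfl

end Blocks

section LinearODE

variable {n : Type*} [Fintype n]

theorem eq_mulVec_of_hasDerivAt_of_eq_at_zero (L : Matrix n n ℝ) (u v : ℝ → n → ℝ)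
    (hu : ∀ t, HasDerivAt u (v t) t) (hv : ∀ t, HasDerivAt v (L *ᵥ v t) t)
    (h0 : v 0 = L *ᵥ u 0) (t : ℝ) : v t = L *ᵥ u t := by
  have hw : ∀ s, HasDerivAt (fun s => v s - L *ᵥ u s) 0 s := fun s => by
    have h := (hv s).sub
      ((LinearMap.toContinuousLinearMap L.mulVecLin).hasFDerivAt.comp_hasDerivAt s (hu s))
    rwa [LinearMap.coe_toContinuousLinearMap', mulVecLin_apply, sub_self] at h
  have hconst := is_const_of_deriv_eq_zero (fun s => (hw s).differentiableAt)
    (fun s => (hw s).deriv) t 0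
  simpa [h0, sub_eq_zero] using hconst

variable [DecidableEq n]

section Exp

-- Any matrix norm would do: it is needed to differentiate `exp`, whose value does not depend on it.
attribute [local instance] Matrix.linftyOpNormedRing Matrix.linftyOpNormedAlgebra

theorem hasDerivAt_exp_smul_mulVec (L : Matrix n n ℝ) (y : n → ℝ) (t : ℝ) :
    HasDerivAt (fun s : ℝ => NormedSpace.exp (s • L) *ᵥ y)
      (L *ᵥ (NormedSpace.exp (t • L) *ᵥ y)) t := by
  rw [mulVec_mulVec]
  exact (LinearMap.toContinuousLinearMap ((mulVecBilin ℝ ℝ).flip y)).hasFDerivAt.comp_hasDerivAt t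
    (hasDerivAt_exp_smul_const' (𝕂 := ℝ) L t)

end Exp

theorem eq_exp_smul_mulVec_of_hasDerivAt (L : Matrix n n ℝ) (v : ℝ → n → ℝ)
    (hv : ∀ t, HasDerivAt v (L *ᵥ v t) t) (t : ℝ) :
    v t = NormedSpace.exp (t • L) *ᵥ v 0 := by
  have hL := (LinearMap.toContinuousLinearMap L.mulVecLin).lipschitz
  refine congrFun (ODE_solution_unique_univ (v := fun _ => (L *ᵥ ·)) (s := fun _ => Set.univ)
    (t₀ := 0) (fun _ => hL.lipschitzOnWith) (fun t => ⟨hv t, trivial⟩)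
    (fun t => ⟨hasDerivAt_exp_smul_mulVec L (v 0) t, trivial⟩) ?_) t
  simp

end LinearODE

/-- The mean of the once-integrated Ornstein–Uhlenbeck process with rate L and consistent
initialization μ(0) = [y₀; Ly₀] solves the linear ODE exactly: if μ̇ = A_IOUP μ with
A_IOUP = [[0, I],[0, L]], then the first block μ⁽⁰⁾(t) = exp(Lt) y₀, which solves
ẏ = Ly, y(0) = y₀. -/
theorem ioup_mean_solves_linear_ode {d : ℕ} (L : Matrix (Fin d) (Fin d) ℝ)
    (y₀ : Fin d → ℝ) (μ : ℝ → (Fin d ⊕ Fin d → ℝ))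
    (hode : ∀ t, HasDerivAt μ
      ((Matrix.fromBlocks (0 : Matrix (Fin d) (Fin d) ℝ) 1 0 L).mulVec (μ t)) t)
    (h0 : μ 0 = Sum.elim y₀ (L.mulVec y₀)) :
    (∀ t, (fun a => μ t (Sum.inl a)) = (NormedSpace.exp (t • L)).mulVec y₀) ∧
      (∀ t, HasDerivAt (fun s => (fun a => μ s (Sum.inl a)))
        (L.mulVec (fun a => μ t (Sum.inl a))) t) ∧
      (fun a => μ 0 (Sum.inl a)) = y₀ := by
  have hu : ∀ t, HasDerivAt (fun s a => μ s (Sum.inl a)) (fun a => μ t (Sum.inr a)) t :=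
    fun t => by simpa [fromBlocks_zero_one_zero_mulVec] using (hode t).comp_inl
  have hv : ∀ t, HasDerivAt (fun s a => μ s (Sum.inr a)) (L *ᵥ fun a => μ t (Sum.inr a)) t :=
    fun t => by simpa [fromBlocks_zero_one_zero_mulVec] using (hode t).comp_inr
  have hu0 : (fun a => μ 0 (Sum.inl a)) = y₀ := by rw [h0]; rfl
  have hv0 : (fun a => μ 0 (Sum.inr a)) = L *ᵥ y₀ := by rw [h0]; rfl
  have hlin : ∀ t, HasDerivAt (fun s a => μ s (Sum.inl a)) (L *ᵥ fun a => μ t (Sum.inl a)) t :=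
    fun t => eq_mulVec_of_hasDerivAt_of_eq_at_zero L _ _ hu hv (by rw [hu0, hv0]) t ▸ hu t
  refine ⟨fun t => ?_, hlin, hu0⟩
  rw [eq_exp_smul_mulVec_of_hasDerivAt L _ hlin t, hu0]
end

section
/- For the once-integrated Ornstein–Uhlenbeck filter with exact initialization μ₀ = [y₀; Ly₀ + N(y₀)], Σ₀ = 0, the filtering means satisfy μ_n = [y_n; L y_n + N(ỹ_n)] for all n, where ỹ_{n+1} = exp(Lh) y_n + h φ₁(Lh) N(ỹ_n) and y_{n+1} = exp(Lh) y_n + h φ₁(Lh) N(ỹ_n) + h φ₂(Lh)(N(ỹ_{n+1}) - N(ỹ_n)), with ỹ₀ = y₀. I.e., the probabilistic exponential integrator mean equals the classic exponential trapezoidal rule in predict-evaluate-correct mode. -/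
/-!
Write `E = exp(hL)` and `P_k = φ_k(hL)`. Integration by parts in the integral defining
`φ_{k+1}` gives `M φ_{k+1}(M) = φ_k(M) - 1/k!`, and `L` commutes with `E` and every `P_k`.
Hence, if `μ_n = [y; L y + f]`, the first block of the prediction `Φ(h) μ_n` is the
exponential-Euler predictor `ỹ = E y + h P₁ f`, its second block is `E (L y + f)`, and the residual
collapses to `f - N(ỹ)`. The gain `[h P₂; P₁]` then corrects the prediction to
`[y'; L y' + N(ỹ)]` with `y' = ỹ + h P₂ (N(ỹ) - f)`, which is one step of the exponential
trapezoidal rule; induction on `n` finishes the proof.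
-/

open MeasureTheory Matrix
attribute [local instance] Matrix.frobeniusNormedAddCommGroup Matrix.frobeniusNormedSpace

/-- The classic exponential trapezoidal rule in predict-evaluate-correct mode with
exponential-Euler predictor: returns the pair (y_n, ỹ_n). -/
noncomputable def expTrapezoidal {d : ℕ} (L : Matrix (Fin d) (Fin d) ℝ)
    (N : (Fin d → ℝ) → (Fin d → ℝ)) (h : ℝ) (y₀ : Fin d → ℝ) :
    ℕ → (Fin d → ℝ) × (Fin d → ℝ)
  | 0 => (y₀, y₀)
  | n + 1 =>
    let p := expTrapezoidal L N h y₀ n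
    let yt := (NormedSpace.exp (h • L)).mulVec p.1 + h • (phiM 1 (h • L)).mulVec (N p.2)
    ((NormedSpace.exp (h • L)).mulVec p.1 + h • (phiM 1 (h • L)).mulVec (N p.2) +
        h • (phiM 2 (h • L)).mulVec (N yt - N p.2),
      yt)

/-- The filtering means of the probabilistic exponential integrator with once-integrated
Ornstein–Uhlenbeck prior and exact initialization μ₀ = [y₀; Ly₀ + N(y₀)], Σ₀ = 0:
prediction μ⁻ = Φ(h)μ_n with Φ(h) = [[I, hφ₁(Lh)],[0, exp(Lh)]], residual
ẑ = E₁μ⁻ - (L E₀μ⁻ + N(E₀μ⁻)), Kalman gain K = [hφ₂(Lh); φ₁(Lh)], update μ = μ⁻ - Kẑ. -/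
noncomputable def filterMean {d : ℕ} (L : Matrix (Fin d) (Fin d) ℝ)
    (N : (Fin d → ℝ) → (Fin d → ℝ)) (h : ℝ) (y₀ : Fin d → ℝ) :
    ℕ → (Fin d ⊕ Fin d → ℝ)
  | 0 => Sum.elim y₀ (L.mulVec y₀ + N y₀)
  | n + 1 =>
    let μp := (Matrix.fromBlocks 1 (h • phiM 1 (h • L)) 0
        (NormedSpace.exp (h • L))).mulVec (filterMean L N h y₀ n)
    let yp := fun a => μp (Sum.inl a)
    let z := (fun a => μp (Sum.inr a)) - (L.mulVec yp + N yp)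
    μp - (Matrix.fromRows (h • phiM 2 (h • L)) (phiM 1 (h • L))).mulVec z

open NormedSpace intervalIntegral
open scoped Nat

attribute [local instance] Matrix.frobeniusNormedRing Matrix.frobeniusNormedAlgebra

section IntervalIntegralMul

variable {A : Type*} [NonUnitalNormedRing A] [NormedSpace ℝ A] [IsScalarTower ℝ A A]
  [SMulCommClass ℝ A A] {f : ℝ → A} {a b : ℝ}

lemma mul_intervalIntegral_of_intervalIntegrable (hf : IntervalIntegrable f volume a b) (c : A) :
    c * ∫ x in a..b, f x = ∫ x in a..b, c * f x := by
  simp only [intervalIntegral, mul_sub, integral_const_mul_of_integrable hf.1,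
    integral_const_mul_of_integrable hf.2]

lemma intervalIntegral_mul_of_intervalIntegrable (hf : IntervalIntegrable f volume a b) (c : A) :
    (∫ x in a..b, f x) * c = ∫ x in a..b, f x * c := by
  simp only [intervalIntegral, sub_mul, integral_mul_const_of_integrable hf.1,
    integral_mul_const_of_integrable hf.2]

end IntervalIntegralMul

section PhiFunctions

variable {d : ℕ} (M : Matrix (Fin d) (Fin d) ℝ)

lemma phiM_zero : phiM 0 M = exp M := if_pos rfl

lemma phiM_succ (k : ℕ) :
    phiM (k + 1) M = ∫ τ in (0 : ℝ)..1, (τ ^ k / (k ! : ℝ)) • exp ((1 - τ) • M) := by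
  simp [phiM]

lemma continuous_exp_one_sub_smul : Continuous fun τ : ℝ => exp ((1 - τ) • M) :=
  exp_continuous.comp ((continuous_const.sub continuous_id).smul continuous_const)

lemma hasDerivAt_exp_one_sub_smul (τ : ℝ) :
    HasDerivAt (fun τ : ℝ => exp ((1 - τ) • M)) (-(M * exp ((1 - τ) • M))) τ := by
  have := (hasDerivAt_exp_smul_const' (𝕂 := ℝ) M (1 - τ)).scomp τ ((hasDerivAt_id τ).const_sub 1)
  simp only [Function.comp_def, neg_one_smul] at this
  exact this

lemma Commute.phiM_right {A B : Matrix (Fin d) (Fin d) ℝ} (hAB : Commute A B) (k : ℕ) :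
    Commute A (phiM k B) := by
  cases k with
  | zero => simpa [phiM_zero] using hAB.exp_right
  | succ k =>
    have hc : Continuous fun τ : ℝ => (τ ^ k / (k ! : ℝ)) • NormedSpace.exp ((1 - τ) • B) :=
      ((continuous_pow k).div_const _).smul (continuous_exp_one_sub_smul B)
    have hint := hc.intervalIntegrable (μ := volume) 0 1
    rw [Commute, SemiconjBy, phiM_succ, mul_intervalIntegral_of_intervalIntegrable hint,
      intervalIntegral_mul_of_intervalIntegrable hint]
    congr 1
    funext τ
    rw [mul_smul_comm, smul_mul_assoc, ((hAB.smul_right (1 - τ)).exp_right).eq]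

/-- The form of `φ_k` that integration by parts in `φ_{k+1}` produces; it also covers `k = 0`,
where the integrand vanishes and `0 ^ 0 = 1`. -/
lemma phiM_eq_integral_add (k : ℕ) :
    phiM k M = (∫ τ in (0 : ℝ)..1, (k * τ ^ (k - 1) / k !) • exp ((1 - τ) • M)) +
      ((0 : ℝ) ^ k / k !) • exp M := by
  cases k with
  | zero => simp [phiM_zero]
  | succ k =>
    rw [phiM_succ]
    simp only [ne_eq, Nat.add_one_ne_zero, not_false_eq_true, zero_pow, zero_div, zero_smul,
      add_zero, add_tsub_cancel_right, Nat.factorial_succ, Nat.cast_mul]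
    congr 1
    funext τ
    congr 1
    field_simp

lemma mul_phiM_succ (k : ℕ) : M * phiM (k + 1) M = phiM k M - (k ! : ℝ)⁻¹ • 1 := by
  have hE := continuous_exp_one_sub_smul M
  have hderiv (τ : ℝ) : HasDerivAt (fun τ : ℝ => (τ ^ k / k !) • exp ((1 - τ) • M))
      ((k * τ ^ (k - 1) / k !) • exp ((1 - τ) • M) - (τ ^ k / k !) • (M * exp ((1 - τ) • M))) τ := by
    have := ((hasDerivAt_pow k τ).div_const (k ! : ℝ)).smul (hasDerivAt_exp_one_sub_smul M τ)
    rwa [smul_neg, neg_add_eq_sub] at this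
  have hlower : Continuous fun τ : ℝ => (k * τ ^ (k - 1) / k !) • exp ((1 - τ) • M) :=
    ((continuous_const.mul (continuous_pow _)).div_const _).smul hE
  have hupper : Continuous fun τ : ℝ => (τ ^ k / k !) • (M * exp ((1 - τ) • M)) :=
    ((continuous_pow _).div_const _).smul (continuous_const.mul hE)
  have hFTC := integral_eq_sub_of_hasDerivAt (fun τ _ => hderiv τ)
    ((hlower.intervalIntegrable 0 1).sub (hupper.intervalIntegrable 0 1))
  rw [integral_sub (hlower.intervalIntegrable 0 1) (hupper.intervalIntegrable 0 1)] at hFTC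
  simp only [one_pow, sub_self, zero_smul, exp_zero, sub_zero, one_div, one_smul] at hFTC
  rw [sub_eq_iff_eq_add] at hFTC
  have hintegrand : Continuous fun τ : ℝ => (τ ^ k / k !) • exp ((1 - τ) • M) :=
    ((continuous_pow _).div_const _).smul hE
  rw [phiM_succ, mul_intervalIntegral_of_intervalIntegrable (hintegrand.intervalIntegrable 0 1),
    phiM_eq_integral_add]
  simp only [mul_smul_comm]
  rw [hFTC]
  abel

end PhiFunctions

section FilterStep

variable {d : ℕ} (L : Matrix (Fin d) (Fin d) ℝ) (h : ℝ)

lemma mulVec_smul_phiM_succ_mulVec (k : ℕ) (v : Fin d → ℝ) :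
    L *ᵥ (h • (phiM (k + 1) (h • L) *ᵥ v)) = phiM k (h • L) *ᵥ v - (k ! : ℝ)⁻¹ • v := by
  rw [mulVec_smul, mulVec_mulVec, ← smul_mulVec, ← smul_mul_assoc, mul_phiM_succ, sub_mulVec,
    smul_mulVec, one_mulVec]

lemma filterMean_succ_of_eq {N : (Fin d → ℝ) → (Fin d → ℝ)} {y₀ : Fin d → ℝ} {n : ℕ}
    {y f : Fin d → ℝ} (hn : filterMean L N h y₀ n = Sum.elim y (L *ᵥ y + f)) :
    let yPred := exp (h • L) *ᵥ y + h • (phiM 1 (h • L) *ᵥ f)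
    let yNext := yPred + h • (phiM 2 (h • L) *ᵥ (N yPred - f))
    filterMean L N h y₀ (n + 1) = Sum.elim yNext (L *ᵥ yNext + N yPred) := by
  intro yPred yNext
  have hφ₁ (v : Fin d → ℝ) : L *ᵥ (h • (phiM 1 (h • L) *ᵥ v)) = exp (h • L) *ᵥ v - v := by
    simpa [phiM_zero] using mulVec_smul_phiM_succ_mulVec L h 0 v
  have hφ₂ (v : Fin d → ℝ) : L *ᵥ (h • (phiM 2 (h • L) *ᵥ v)) = phiM 1 (h • L) *ᵥ v - v := by
    simpa using mulVec_smul_phiM_succ_mulVec L h 1 v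
  have hLh : Commute L (h • L) := (Commute.refl L).smul_right h
  have hLE : Commute L (exp (h • L)) := by simpa [phiM_zero] using hLh.phiM_right 0
  have hLP₁ : Commute L (phiM 1 (h • L)) := hLh.phiM_right 1
  have hpredict : fromBlocks 1 (h • phiM 1 (h • L)) 0 (exp (h • L)) *ᵥ Sum.elim y (L *ᵥ y + f) =
      Sum.elim yPred (exp (h • L) *ᵥ (L *ᵥ y + f)) := by
    rw [fromBlocks_mulVec, Sum.elim_comp_inl, Sum.elim_comp_inr, zero_mulVec, zero_add, one_mulVec,
      smul_mulVec, mulVec_add, mulVec_mulVec, ← hLP₁.eq, ← mulVec_mulVec, smul_add, ← mulVec_smul,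
      hφ₁]
    congr 1
    simp only [yPred]
    abel
  have hLyPred : L *ᵥ yPred = exp (h • L) *ᵥ (L *ᵥ y) + (exp (h • L) *ᵥ f - f) := by
    rw [mulVec_add L, hφ₁, mulVec_mulVec, hLE.eq, ← mulVec_mulVec]
  have hresidual : exp (h • L) *ᵥ (L *ᵥ y + f) - (L *ᵥ yPred + N yPred) = f - N yPred := by
    rw [hLyPred, mulVec_add (exp (h • L))]
    abel
  rw [filterMean, hn]
  simp only [hpredict, Sum.elim_inl, Sum.elim_inr]
  rw [hresidual, fromRows_mulVec, ← Sum.elim_sub_sub]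
  congr 1
  · simp only [yNext]
    rw [smul_mulVec, mulVec_sub, mulVec_sub, smul_sub, smul_sub]
    abel
  · rw [mulVec_add L, hφ₂, hLyPred, mulVec_add (exp (h • L)), mulVec_sub, mulVec_sub]
    abel

end FilterStep

theorem prob_exp_integrator_equiv_trapezoidal_general {d : ℕ} (L : Matrix (Fin d) (Fin d) ℝ)
    (N : (Fin d → ℝ) → (Fin d → ℝ)) (h : ℝ) (y₀ : Fin d → ℝ) (n : ℕ) :
    filterMean L N h y₀ n =
      Sum.elim (expTrapezoidal L N h y₀ n).1
        (L.mulVec (expTrapezoidal L N h y₀ n).1 + N (expTrapezoidal L N h y₀ n).2) := by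
  induction n with
  | zero => rfl
  | succ n ih => exact filterMean_succ_of_eq L h ih

/-- Proposition 2: the probabilistic exponential integrator mean equals the exponential
trapezoidal rule in predict-evaluate-correct mode:
μ_n = [y_n; L y_n + N(ỹ_n)] for all n. -/
theorem prob_exp_integrator_equiv_trapezoidal {d : ℕ} (L : Matrix (Fin d) (Fin d) ℝ)
    (N : (Fin d → ℝ) → (Fin d → ℝ)) (h : ℝ) (hh : 0 < h) (y₀ : Fin d → ℝ) (n : ℕ) :
    filterMean L N h y₀ n =
      Sum.elim (expTrapezoidal L N h y₀ n).1
        (L.mulVec (expTrapezoidal L N h y₀ n).1 + N (expTrapezoidal L N h y₀ n).2) :=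
  prob_exp_integrator_equiv_trapezoidal_general L N h y₀ n
end

section
/- For the residual in the IOUP(q=1) exponential-integrator filter step: if μ_n = [y_n; Ly_n + N(ỹ_n)] and μ⁻_{n+1} = Φ(h)μ_n with Φ(h) = [[I, hφ₁(Lh)],[0, exp(Lh)]], then E₁μ⁻_{n+1} - L E₀μ⁻_{n+1} - N(E₀μ⁻_{n+1}) = N(ỹ_n) - N(ỹ_{n+1}), where ỹ_{n+1} := E₀μ⁻_{n+1} = exp(Lh)y_n + hφ₁(Lh)N(ỹ_n). -/
/-!
By the fundamental theorem of calculus applied to `τ ↦ exp (τ • M)`, `M φ₁(M) = exp M - I`.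
With `M = hL` this says `L (hφ₁(hL)) = exp(hL) - I`, so for `v = L yₙ + N(ỹₙ)` the predicted
derivative block `exp(hL) v` and `L ỹₙ₊₁ = L yₙ + L hφ₁(hL) v` differ by exactly `v - L yₙ = N(ỹₙ)`.
-/

open MeasureTheory Matrix
attribute [local instance] Matrix.frobeniusNormedAddCommGroup Matrix.frobeniusNormedSpace

section BanachAlgebra

variable {𝔸 : Type*} [NormedRing 𝔸] [NormedAlgebra ℝ 𝔸] [CompleteSpace 𝔸]

theorem integral_mul_exp_smul (M : 𝔸) :
    ∫ τ in (0:ℝ)..1, M * NormedSpace.exp (τ • M) = NormedSpace.exp M - 1 := by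
  have hcont : Continuous fun τ : ℝ => M * NormedSpace.exp (τ • M) :=
    continuous_const.mul (differentiable_exp_smul_const ℝ M).continuous
  rw [intervalIntegral.integral_eq_sub_of_hasDerivAt
    (fun τ _ => hasDerivAt_exp_smul_const' M τ) (hcont.intervalIntegrable _ _)]
  simp

theorem mul_integral_exp_one_sub_smul (M : 𝔸) :
    M * ∫ τ in (0:ℝ)..1, NormedSpace.exp ((1 - τ) • M) = NormedSpace.exp M - 1 := by
  rw [intervalIntegral.integral_comp_sub_left (fun τ => NormedSpace.exp (τ • M)), sub_self,
    sub_zero, ← integral_mul_exp_smul]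
  exact ((ContinuousLinearMap.mul ℝ 𝔸 M).intervalIntegral_comp_comm
    ((differentiable_exp_smul_const ℝ M).continuous.intervalIntegrable _ _)).symm

end BanachAlgebra

attribute [local instance] Matrix.frobeniusNormedRing Matrix.frobeniusNormedAlgebra

theorem phiM_one {d : ℕ} (M : Matrix (Fin d) (Fin d) ℝ) :
    phiM 1 M = ∫ τ in (0:ℝ)..1, NormedSpace.exp ((1 - τ) • M) := by
  simp [phiM]

theorem mul_phiM_one {d : ℕ} (M : Matrix (Fin d) (Fin d) ℝ) :
    M * phiM 1 M = NormedSpace.exp M - 1 := by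
  rw [phiM_one]
  exact mul_integral_exp_one_sub_smul M

section Blocks

variable {n : Type*} [Fintype n] [DecidableEq n] {R : Type*} [Ring R]

theorem fromBlocks_one_zero_mulVec_sumElim (P E : Matrix n n R) (y v : n → R) :
    fromBlocks 1 P 0 E *ᵥ Sum.elim y v = Sum.elim (y + P *ᵥ v) (E *ᵥ v) := by
  simp [fromBlocks_mulVec, Function.comp_def]

theorem mulVec_sub_mulVec_add_mulVec_of_mul_eq_sub_one {L P E : Matrix n n R}
    (hLP : L * P = E - 1) (y v : n → R) :
    E *ᵥ v - L *ᵥ (y + P *ᵥ v) = v - L *ᵥ y := by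
  rw [mulVec_add, mulVec_mulVec, hLP, sub_mulVec, one_mulVec]
  abel

end Blocks

theorem residual_formula_general {d : ℕ} (L : Matrix (Fin d) (Fin d) ℝ)
    (N : (Fin d → ℝ) → (Fin d → ℝ)) (h : ℝ)
    (yn ytn : Fin d → ℝ) :
    let μp := (Matrix.fromBlocks 1 (h • phiM 1 (h • L)) 0
        (NormedSpace.exp (h • L))).mulVec (Sum.elim yn (L.mulVec yn + N ytn))
    let ytn1 := fun a => μp (Sum.inl a)
    ((fun a => μp (Sum.inr a)) - L.mulVec ytn1 - N ytn1) = N ytn - N ytn1 := by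
  intro μp ytn1
  set P := h • phiM 1 (h • L)
  set v := L *ᵥ yn + N ytn
  have hLP : L * P = NormedSpace.exp (h • L) - 1 := by
    rw [mul_smul_comm, ← smul_mul_assoc, mul_phiM_one]
  have hμp : μp = Sum.elim (yn + P *ᵥ v) (NormedSpace.exp (h • L) *ᵥ v) :=
    fromBlocks_one_zero_mulVec_sumElim _ _ _ _
  have hytn1 : ytn1 = yn + P *ᵥ v := by simp only [ytn1, hμp, Sum.elim_inl]
  have hinr : (fun a => μp (Sum.inr a)) = NormedSpace.exp (h • L) *ᵥ v := by
    simp only [hμp, Sum.elim_inr]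
  rw [hinr, hytn1, mulVec_sub_mulVec_add_mulVec_of_mul_eq_sub_one hLP]
  simp only [v, add_sub_cancel_left]

/-- The residual of the IOUP(q=1) exponential-integrator filter step: with
μ_n = [y_n; Ly_n + N(ỹ_n)], prediction μ⁻ = Φ(h)μ_n where Φ(h) = [[I, hφ₁(Lh)],[0, exp(Lh)]],
and ỹ_{n+1} := E₀μ⁻ = exp(Lh)y_n + hφ₁(Lh)N(ỹ_n), the residual satisfies
E₁μ⁻ - L E₀μ⁻ - N(E₀μ⁻) = N(ỹ_n) - N(ỹ_{n+1}). -/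
theorem residual_formula {d : ℕ} (L : Matrix (Fin d) (Fin d) ℝ)
    (N : (Fin d → ℝ) → (Fin d → ℝ)) (h : ℝ) (hh : 0 < h)
    (yn ytn : Fin d → ℝ) :
    let μp := (Matrix.fromBlocks 1 (h • phiM 1 (h • L)) 0
        (NormedSpace.exp (h • L))).mulVec (Sum.elim yn (L.mulVec yn + N ytn))
    let ytn1 := fun a => μp (Sum.inl a)
    ((fun a => μp (Sum.inr a)) - L.mulVec ytn1 - N ytn1) = N ytn - N ytn1 :=
  residual_formula_general L N h yn ytn
end
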